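/- arXiv:2411.12696 — 3 statements merged into one kernel-verified Lean document; each statement's English description precedes it below -/
import Mathlib

section
/- If the weighted envy graph of allocation A has no positive-cost cycles, then setting s_i = w_i · ℓ_i(A), where ℓ_i(A) is the maximum cost of a directed path starting at agent i, yields a nonnegative subsidy vector making (A,s) weighted-envy-free. -/
/-- Sum of edge costs along the consecutive pairs of a list (a directed path). -/
noncomputable def pathCost {n : ℕ} (c : Fin n → Fin n → ℝ) (p : List (Fin n)) : ℝ :=
  ((p.zip p.tail).map fun q => c q.1 q.2).sum

/-- Sum of edge costs along a cycle `i₁,…,i_r,i₁`. -/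
noncomputable def cycleCost {n : ℕ} (c : Fin n → Fin n → ℝ) (p : List (Fin n)) : ℝ :=
  ((p.zip (p.rotate 1)).map fun q => c q.1 q.2).sum

/-- Weighted envy edge cost without subsidies. -/
noncomputable def envyCost {n : ℕ} (v : Fin n → Fin n → ℝ) (w : Fin n → ℝ) (i j : Fin n) : ℝ :=
  v i j / w j - v i i / w i

/-- Weighted envy edge cost with subsidy vector `s`. -/
noncomputable def envyCostS {n : ℕ} (v : Fin n → Fin n → ℝ) (w : Fin n → ℝ) (s : Fin n → ℝ)
    (i j : Fin n) : ℝ :=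
  (v i j + s j) / w j - (v i i + s i) / w i

/-- `(A,s)` is weighted-envy-free. -/
def IsWEF {n : ℕ} (v : Fin n → Fin n → ℝ) (w : Fin n → ℝ) (s : Fin n → ℝ) : Prop :=
  ∀ i j, (v i j + s j) / w j ≤ (v i i + s i) / w i

/-- The set of costs of (vertex-distinct) directed paths starting at `i`. -/
noncomputable def pathCostsFrom {n : ℕ} (c : Fin n → Fin n → ℝ) (i : Fin n) : Set ℝ :=
  {x | ∃ p : List (Fin n), p ≠ [] ∧ p.Nodup ∧ p.head? = some i ∧ pathCost c p = x}

/-!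
Let `ℓ i` be the largest cost of a path leaving `i`. The subsidies `w i * ℓ i` are weighted-envy-free
exactly when `cost(i, j) + ℓ j ≤ ℓ i` for every edge `(i, j)`. To see this, take a maximal path `p`
from `j`. If `p` avoids `i`, then `i :: p` is a path from `i`. Otherwise `p` splits at `i`; the part
before `i` closes with the edge `(i, j)` into a cycle, whose cost is nonpositive, and the part after
`i` is a path from `i`. Nonnegativity comes from the trivial path `[i]`.
-/

section PathCost

variable {n : ℕ} (c : Fin n → Fin n → ℝ)

@[simp]
lemma pathCost_singleton (x : Fin n) : pathCost c [x] = 0 := by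
  simp [pathCost]

@[simp]
lemma pathCost_cons_cons (x y : Fin n) (l : List (Fin n)) :
    pathCost c (x :: y :: l) = c x y + pathCost c (y :: l) := by
  simp [pathCost]

lemma pathCost_append_cons (l₁ : List (Fin n)) (x : Fin n) (l₂ : List (Fin n)) :
    pathCost c (l₁ ++ x :: l₂) = pathCost c (l₁ ++ [x]) + pathCost c (x :: l₂) := by
  induction l₁ with
  | nil => simp
  | cons y l₁ ih =>
    cases l₁ with
    | nil => simp
    | cons z l₁ => simp only [List.cons_append, pathCost_cons_cons] at ih ⊢; rw [ih, add_assoc]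

lemma cycleCost_eq_pathCost (x : Fin n) (l : List (Fin n)) :
    cycleCost c (x :: l) = pathCost c (x :: l ++ [x]) := by
  have hzip : (x :: l ++ [x]).zip (l ++ [x]) = (x :: l).zip (l ++ [x]) := by
    simpa using List.zip_append (l₁ := x :: l) (l₂ := l ++ [x]) (r₁ := [x]) (r₂ := []) (by simp)
  rw [cycleCost, pathCost, List.cons_append, List.tail_cons, ← List.cons_append, hzip,
    List.rotate_cons_succ, List.rotate_zero]

lemma zero_mem_pathCostsFrom (i : Fin n) : (0 : ℝ) ∈ pathCostsFrom c i :=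
  ⟨[i], by simp, by simp, by simp, by simp⟩

lemma cons_mem_pathCostsFrom {i j : Fin n} {l : List (Fin n)} (hl : (j :: l).Nodup)
    (hi : i ∉ j :: l) : c i j + pathCost c (j :: l) ∈ pathCostsFrom c i :=
  ⟨i :: j :: l, by simp, List.nodup_cons.2 ⟨hi, hl⟩, by simp, by simp⟩

lemma add_le_of_isGreatest_pathCostsFrom
    (hcyc : ∀ l : List (Fin n), l ≠ [] → cycleCost c l ≤ 0) {ℓ : Fin n → ℝ}
    (hℓ : ∀ i, IsGreatest (pathCostsFrom c i) (ℓ i)) (i j : Fin n) :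
    c i j + ℓ j ≤ ℓ i := by
  obtain ⟨p, hp, hnodup, hhead, hcost⟩ := (hℓ j).1
  obtain ⟨x, p', rfl⟩ := List.exists_cons_of_ne_nil hp
  obtain rfl : j = x := by simpa using hhead.symm
  by_cases hi : i ∈ j :: p'
  · obtain ⟨before, after, hsplit⟩ := List.append_of_mem hi
    rw [hsplit] at hnodup hcost
    have hafter : pathCost c (i :: after) ≤ ℓ i :=
      (hℓ i).2 ⟨i :: after, by simp, hnodup.sublist (List.sublist_append_right _ _), by simp, rfl⟩
    rw [pathCost_append_cons] at hcost
    have hcycle := hcyc (i :: before) (by simp)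
    rw [cycleCost_eq_pathCost] at hcycle
    cases before with
    | nil =>
      obtain ⟨rfl, -⟩ := List.cons_eq_cons.1 hsplit
      simp only [List.nil_append, List.cons_append, pathCost_singleton, pathCost_cons_cons]
        at hcost hcycle
      linarith
    | cons y before =>
      obtain ⟨rfl, -⟩ := List.cons_eq_cons.1 hsplit
      simp only [List.cons_append, pathCost_cons_cons] at hcost hcycle
      linarith
  · linarith [(hℓ i).2 (cons_mem_pathCostsFrom c hnodup hi)]

end PathCost

lemma isWEF_mul_iff {n : ℕ} {w : Fin n → ℝ} (hw : ∀ i, 0 < w i) (v : Fin n → Fin n → ℝ)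
    (ℓ : Fin n → ℝ) :
    IsWEF v w (fun i => w i * ℓ i) ↔ ∀ i j, envyCost v w i j + ℓ j ≤ ℓ i := by
  have hdiv : ∀ i x, (x + w i * ℓ i) / w i = x / w i + ℓ i := fun i x => by
    rw [add_div, mul_div_cancel_left₀ _ (hw i).ne']
  simp only [IsWEF, envyCost, hdiv]
  exact forall₂_congr fun i j => by constructor <;> intro h <;> linarith

theorem max_path_subsidy_is_WEF_general {n : ℕ} (w : Fin n → ℝ) (hw : ∀ i, 0 < w i)
    (v : Fin n → Fin n → ℝ)
    (hcyc : ∀ c : List (Fin n), c ≠ [] → cycleCost (envyCost v w) c ≤ 0)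
    (ℓ : Fin n → ℝ) (hℓ : ∀ i, IsGreatest (pathCostsFrom (envyCost v w) i) (ℓ i)) :
    (∀ i, 0 ≤ w i * ℓ i) ∧ IsWEF v w (fun i => w i * ℓ i) :=
  ⟨fun i => mul_nonneg (hw i).le ((hℓ i).2 (zero_mem_pathCostsFrom _ i)),
    (isWEF_mul_iff hw v ℓ).2 (add_le_of_isGreatest_pathCostsFrom _ hcyc hℓ)⟩

/-- If there is no positive-cost cycle, then the subsidies
`s i = w i * ℓ i` (with `ℓ i` the max cost of a path starting at `i`)
are nonnegative and make the allocation weighted-envy-free. -/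
theorem max_path_subsidy_is_WEF {n : ℕ} (w : Fin n → ℝ) (hw : ∀ i, 0 < w i)
    (v : Fin n → Fin n → ℝ) (hv : ∀ i j, 0 ≤ v i j)
    (hcyc : ∀ c : List (Fin n), c ≠ [] → cycleCost (envyCost v w) c ≤ 0)
    (ℓ : Fin n → ℝ) (hℓ : ∀ i, IsGreatest (pathCostsFrom (envyCost v w) i) (ℓ i)) :
    (∀ i, 0 ≤ w i * ℓ i) ∧ IsWEF v w (fun i => w i * ℓ i) :=
  max_path_subsidy_is_WEF_general w hw v hcyc ℓ hℓ
end

section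
/- Minimum-cost lemma: let A be a WEF-able allocation and z > 0; if cost_A(i,k) ≥ −z for every ordered pair (i,k) of distinct agents, then ℓ_i(A) ≤ z for every agent i, hence the minimal subsidy of agent i is at most w_i·z. -/
/-!
Closing a directed path by the edge from its last vertex back to its first turns it into a cycle,
whose cost is the path cost plus that edge. For a vertex-distinct path of length at least one this
closing edge joins distinct agents, so costs at least `-z`, and the cycle costs at most `0`: hence
every path, in particular a maximum-cost one, costs at most `z`.
-/

lemma List.zip_cons_append_singleton {α : Type*} (a x : α) (l : List α) :
    (a :: l).zip (l ++ [x]) = (a :: l).zip l ++ [((a :: l).getLast (List.cons_ne_nil a l), x)] := by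
  induction l generalizing a with
  | nil => rfl
  | cons b l ih => simp [ih b]

lemma cycleCost_cons {n : ℕ} (c : Fin n → Fin n → ℝ) (a : Fin n) (l : List (Fin n)) :
    cycleCost c (a :: l) = pathCost c (a :: l) + c ((a :: l).getLast (List.cons_ne_nil a l)) a := by
  simp [cycleCost, pathCost, List.zip_cons_append_singleton]

lemma List.Nodup.getLast_cons_ne {α : Type*} {a : α} {l : List α} (hnd : (a :: l).Nodup)
    (hl : l ≠ []) : (a :: l).getLast (List.cons_ne_nil a l) ≠ a := by
  rw [List.getLast_cons hl]
  exact fun h => List.nodup_cons.mp hnd |>.1 (h ▸ List.getLast_mem hl)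

lemma pathCost_le_of_cycleCost_nonpos {n : ℕ} {c : Fin n → Fin n → ℝ} {z : ℝ} (hz : 0 ≤ z)
    (hcyc : ∀ p : List (Fin n), p ≠ [] → cycleCost c p ≤ 0)
    (hedge : ∀ i k, i ≠ k → -z ≤ c i k) {p : List (Fin n)} (hp : p ≠ []) (hnd : p.Nodup) :
    pathCost c p ≤ z := by
  obtain ⟨a, l, rfl⟩ := List.exists_cons_of_ne_nil hp
  rcases eq_or_ne l [] with rfl | hl
  · simpa [pathCost] using hz
  · have hclose := hedge _ _ (hnd.getLast_cons_ne hl)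
    have hcycle := hcyc _ hp
    rw [cycleCost_cons] at hcycle
    linarith

/-- Minimum-cost lemma: if every edge of the weighted envy graph of a WEF-able
allocation costs at least −z, then ℓᵢ ≤ z, hence the minimal subsidy of agent i
is at most wᵢ·z. -/
theorem min_cost_subsidy_lemma {n : ℕ}
    (w : Fin n → ℝ) (hw : ∀ i, 0 < w i)
    (v : Fin n → Fin n → ℝ)
    (hcyc : ∀ c : List (Fin n), c ≠ [] → cycleCost (envyCost v w) c ≤ 0)
    (z : ℝ) (hz : 0 < z)
    (hedge : ∀ i k, i ≠ k → -z ≤ envyCost v w i k)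
    (ℓ : Fin n → ℝ)
    (hℓ : ∀ i, IsGreatest (pathCostsFrom (envyCost v w) i) (ℓ i)) :
    ∀ i, ℓ i ≤ z ∧ w i * ℓ i ≤ w i * z := by
  intro i
  obtain ⟨p, hp, hnd, -, hcost⟩ := (hℓ i).1
  have hℓz : ℓ i ≤ z := hcost ▸ pathCost_le_of_cycleCost_nonpos hz.le hcyc hedge hp hnd
  exact ⟨hℓz, mul_le_mul_of_nonneg_left hℓz (hw i).le⟩
end

section
/- With binary additive valuations, every non-redundant allocation (one where v_i(A_i) = |A_i| for all i) is weighted-envy-freeable: every cycle in the weighted envy graph has nonpositive total cost. -/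
section Rotate

variable {α M : Type*} [AddCommMonoid M]

theorem sum_map_snd_zip_rotate_one (p : List α) (f : α → M) :
    ((p.zip (p.rotate 1)).map fun q => f q.2).sum = (p.map f).sum := by
  have hlen : (p.rotate 1).length ≤ p.length := (p.length_rotate 1).le
  change ((p.zip (p.rotate 1)).map (f ∘ Prod.snd)).sum = _
  rw [← List.map_map, List.map_snd_zip hlen]
  exact ((p.rotate_perm 1).map f).sum_eq

theorem sum_map_fst_zip_rotate_one (p : List α) (f : α → M) :
    ((p.zip (p.rotate 1)).map fun q => f q.1).sum = (p.map f).sum := by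
  have hlen : p.length ≤ (p.rotate 1).length := (p.length_rotate 1).ge
  change ((p.zip (p.rotate 1)).map (f ∘ Prod.fst)).sum = _
  rw [← List.map_map, List.map_fst_zip hlen]

end Rotate

theorem cycleCost_nonpos_of_le_sub {n : ℕ} {c : Fin n → Fin n → ℝ} {f : Fin n → ℝ}
    (h : ∀ i j, c i j ≤ f j - f i) (p : List (Fin n)) : cycleCost c p ≤ 0 := by
  have key : cycleCost c p + (p.map f).sum ≤ (p.map f).sum :=
    calc cycleCost c p + (p.map f).sum
        = ((p.zip (p.rotate 1)).map fun q => c q.1 q.2 + f q.1).sum := by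
          rw [List.sum_map_add, cycleCost, sum_map_fst_zip_rotate_one]
      _ ≤ ((p.zip (p.rotate 1)).map fun q => f q.2).sum :=
          List.sum_le_sum fun q _ => by linarith [h q.1 q.2]
      _ = (p.map f).sum := sum_map_snd_zip_rotate_one p f
  linarith

section Envy

variable {n : ℕ} {v : Fin n → Fin n → ℝ} {w : Fin n → ℝ}

theorem div_weight_le_of_le_diag (hw : ∀ i, 0 < w i) (hle : ∀ i j, v i j ≤ v j j) (i j : Fin n) :
    v i j / w j ≤ v j j / w j :=
  div_le_div_of_nonneg_right (hle i j) (hw j).le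

theorem envyCost_le_sub (hw : ∀ i, 0 < w i) (hle : ∀ i j, v i j ≤ v j j) (i j : Fin n) :
    envyCost v w i j ≤ v j j / w j - v i i / w i := by
  unfold envyCost
  linarith [div_weight_le_of_le_diag hw hle i j]

theorem exists_nonneg_isWEF_of_le_diag (hw : ∀ i, 0 < w i) (hle : ∀ i j, v i j ≤ v j j) :
    ∃ s : Fin n → ℝ, (∀ i, 0 ≤ s i) ∧ IsWEF v w s := by
  set f : Fin n → ℝ := fun k => v k k / w k
  set M : ℝ := ⨆ k, f k
  have hfM : ∀ k, f k ≤ M := le_ciSup (Finite.bddAbove_range f)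
  have hlevel : ∀ i j, (v i j + w j * (M - f j)) / w j = v i j / w j + (M - f j) := fun i j => by
    rw [add_div, mul_div_cancel_left₀ _ (hw j).ne']
  refine ⟨fun j => w j * (M - f j), fun j => mul_nonneg (hw j).le (sub_nonneg.2 (hfM j)), ?_⟩
  intro i j
  rw [hlevel, hlevel]
  linarith [div_weight_le_of_le_diag hw hle i j]

end Envy

theorem sum_le_card_of_binary {ι : Type*} {u : ι → ℝ} (hbin : ∀ o, u o = 0 ∨ u o = 1)
    (s : Finset ι) : ∑ o ∈ s, u o ≤ s.card := by
  simpa using Finset.sum_le_card_nsmul s u 1 fun o _ => by rcases hbin o with h | h <;> simp [h]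

/-- With binary additive valuations, every non-redundant allocation is
WEF-able: every cycle in the weighted envy graph has nonpositive cost. -/
theorem nonredundant_binary_wefable {n m : ℕ}
    (w : Fin n → ℝ) (hw : ∀ i, 0 < w i)
    (val : Fin n → Fin m → ℝ) (hbin : ∀ i o, val i o = 0 ∨ val i o = 1)
    (A : Fin n → Finset (Fin m))
    (hnr : ∀ i, ∑ o ∈ A i, val i o = (A i).card)
    (v : Fin n → Fin n → ℝ) (hv : ∀ i j, v i j = ∑ o ∈ A j, val i o) :
    (∀ c : List (Fin n), c ≠ [] → cycleCost (envyCost v w) c ≤ 0) ∧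
    (∃ s : Fin n → ℝ, (∀ i, 0 ≤ s i) ∧ IsWEF v w s) := by
  have hle : ∀ i j, v i j ≤ v j j := fun i j => by
    rw [hv i j, hv j j, hnr j]
    exact sum_le_card_of_binary (hbin i) (A j)
  exact ⟨fun c _ => cycleCost_nonpos_of_le_sub (envyCost_le_sub hw hle) c,
    exists_nonneg_isWEF_of_le_diag hw hle⟩
end
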